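/- arXiv:2510.18994 — 6 statements merged into one kernel-verified Lean document; each statement's English description precedes it below -/
import Mathlib

section
/- Let θ be a real number with sin θ ≠ 0 and sin 2θ ≠ 0. Then for every natural number ν, ∑_{j=0}^{⌊ν/2⌋} sin((2(ν − 2j) + 1)θ)/sin θ = sin((ν+2)θ)·sin((ν+1)θ)/(sin θ · sin 2θ). -/
/-!
Clearing the common factor `sin θ`, it suffices that `S ν * sin 2θ = sin ((ν+2)θ) sin ((ν+1)θ)`,
where `S ν` is the sum of the `sin ((2m+1)θ)` over `m ≡ ν mod 2`, `0 ≤ m ≤ ν`. Passing from `ν` to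
`ν + 2` adds the term `sin ((2ν+5)θ)` to `S`, and the identity
`sin (a+t) sin (b+t) - sin a sin b = sin (a+b+t) sin t` (with `t = 2θ`) shows that the right-hand
side grows by `sin ((2ν+5)θ) sin 2θ`; a two-step induction finishes.
-/

open Finset Real

theorem sin_add_mul_sin_add_sub_sin_mul_sin (a b t : ℝ) :
    sin (a + t) * sin (b + t) - sin a * sin b = sin (a + b + t) * sin t := by
  simp only [sin_add, cos_add]
  linear_combination (sin a * sin b) * sin_sq_add_cos_sq t

theorem sum_sin_odd_mul_sin_two_mul (θ : ℝ) (ν : ℕ) :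
    (∑ j ∈ range (ν / 2 + 1), sin (((2 * (ν - 2 * j) + 1 : ℕ) : ℝ) * θ)) * sin (2 * θ) =
      sin (((ν : ℝ) + 2) * θ) * sin (((ν : ℝ) + 1) * θ) := by
  induction ν using Nat.twoStepInduction with
  | zero => norm_num [mul_comm]
  | one => norm_num [two_mul, mul_comm]
  | more n ih _ =>
    have hshift :
        ∑ j ∈ range (n / 2 + 1), sin (((2 * (n + 2 - 2 * (j + 1)) + 1 : ℕ) : ℝ) * θ) =
          ∑ j ∈ range (n / 2 + 1), sin (((2 * (n - 2 * j) + 1 : ℕ) : ℝ) * θ) :=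
      sum_congr rfl fun j _ => by rw [show n + 2 - 2 * (j + 1) = n - 2 * j by omega]
    have hstep :
        sin ((n + 2 + 2) * θ) * sin ((n + 2 + 1) * θ) - sin ((n + 2) * θ) * sin ((n + 1) * θ) =
          sin ((2 * (n + 2) + 1) * θ) * sin (2 * θ) := by
      convert sin_add_mul_sin_add_sub_sin_mul_sin ((n + 2) * θ) ((n + 1) * θ) (2 * θ)
        using 4 <;> ring
    rw [show (n + 2) / 2 + 1 = n / 2 + 1 + 1 by omega, sum_range_succ', hshift, add_mul, ih]
    push_cast
    linear_combination -hstep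

theorem symSq_prime_power_closed_form_general (θ : ℝ)
    (h2 : Real.sin (2 * θ) ≠ 0) (ν : ℕ) :
    ∑ j ∈ Finset.range (ν / 2 + 1),
        Real.sin (((2 * (ν - 2 * j) + 1 : ℕ) : ℝ) * θ) / Real.sin θ =
      Real.sin (((ν : ℝ) + 2) * θ) * Real.sin (((ν : ℝ) + 1) * θ) /
        (Real.sin θ * Real.sin (2 * θ)) := by
  rw [← sum_div, ← sum_sin_odd_mul_sin_two_mul, mul_div_mul_right _ _ h2]

theorem symSq_prime_power_closed_form (θ : ℝ) (h1 : Real.sin θ ≠ 0)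
    (h2 : Real.sin (2 * θ) ≠ 0) (ν : ℕ) :
    ∑ j ∈ Finset.range (ν / 2 + 1),
        Real.sin (((2 * (ν - 2 * j) + 1 : ℕ) : ℝ) * θ) / Real.sin θ =
      Real.sin (((ν : ℝ) + 2) * θ) * Real.sin (((ν : ℝ) + 1) * θ) /
        (Real.sin θ * Real.sin (2 * θ)) :=
  symSq_prime_power_closed_form_general θ h2 ν
end

section
/- Let m ≥ 1 be an integer and let θ ∈ (0, π) satisfy sin(2θ) ≠ 0 and θ ∉ {π/(k+1) : 1 ≤ k ≤ m} ∪ {π − π/(k+1) : 1 ≤ k ≤ m}. If sin((ν+1)θ)·sin((ν+2)θ)/(sin θ · sin 2θ) ≥ 0 for every integer ν with 1 ≤ ν ≤ m, then sin(3θ)/sin θ ≥ 3 − 4·sin²(π/(m+2)). -/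
/-!
Since `sin 3θ / sin θ = 3 - 4 sin² θ`, the bound says `sin θ ≤ sin (π / (m + 2))`. The
eigenvalue `sin ((ν+1)θ) sin ((ν+2)θ) / (sin θ sin 2θ)` is invariant under `θ ↦ π - θ`, so
one may take `θ < π / 2`. If then `θ > π / (m + 2)`, it lies in a window
`π / (ν + 2) < θ < π / (ν + 1)` with `1 ≤ ν ≤ m` (the right end point being excluded), and
there the eigenvalue is negative: `(ν + 1) θ ∈ (0, π)` while `(ν + 2) θ ∈ (π, 2π)`.
-/

open Real

noncomputable def symSqEigenvalue (ν : ℕ) (θ : ℝ) : ℝ :=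
  sin (((ν : ℝ) + 1) * θ) * sin (((ν : ℝ) + 2) * θ) / (sin θ * sin (2 * θ))

theorem symSqEigenvalue_pi_sub (ν : ℕ) (θ : ℝ) :
    symSqEigenvalue ν (π - θ) = symSqEigenvalue ν θ := by
  have hsin (n : ℕ) : sin (n * (π - θ)) = -((-1) ^ n * sin (n * θ)) := by
    rw [mul_sub, mul_comm (n : ℝ) π, ← sin_nat_mul_pi_sub, mul_comm]
  have hnum : sin (((ν : ℝ) + 1) * (π - θ)) * sin (((ν : ℝ) + 2) * (π - θ)) =
      -(sin (((ν : ℝ) + 1) * θ) * sin (((ν : ℝ) + 2) * θ)) := by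
    have h1 := hsin (ν + 1)
    have h2 := hsin (ν + 2)
    push_cast at h1 h2
    have hsign : (-1 : ℝ) ^ (ν + 1) * (-1) ^ (ν + 2) = -1 := by
      rw [← pow_add]; exact Odd.neg_one_pow ⟨ν + 1, by ring⟩
    rw [h1, h2]
    linear_combination (sin (((ν : ℝ) + 1) * θ) * sin (((ν : ℝ) + 2) * θ)) * hsign
  have h2θ : sin (2 * (π - θ)) = -sin (2 * θ) := by
    rw [mul_sub, sin_sub, sin_two_pi, cos_two_pi]; ring
  rw [symSqEigenvalue, symSqEigenvalue, hnum, sin_pi_sub, h2θ, mul_neg, neg_div_neg_eq]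

theorem symSqEigenvalue_neg {ν : ℕ} {θ : ℝ} (hν : 1 ≤ ν) (hlo : π / (ν + 2) < θ)
    (hhi : θ < π / (ν + 1)) : symSqEigenvalue ν θ < 0 := by
  have hν' : (1 : ℝ) ≤ ν := by exact_mod_cast hν
  rw [lt_div_iff₀ (by positivity)] at hhi
  rw [div_lt_iff₀ (by positivity)] at hlo
  have hθ : 0 < θ := by nlinarith [pi_pos]
  have hsin₁ : 0 < sin ((ν + 1) * θ) := sin_pos_of_pos_of_lt_pi (by positivity) (by linarith)
  have hsin₂ : sin ((ν + 2) * θ) < 0 := by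
    rw [← sin_sub_two_pi]
    exact sin_neg_of_neg_of_neg_pi_lt (by nlinarith) (by linarith)
  have hsinθ : 0 < sin θ := sin_pos_of_pos_of_lt_pi hθ (by nlinarith)
  have hsin2θ : 0 < sin (2 * θ) := sin_pos_of_pos_of_lt_pi (by positivity) (by nlinarith)
  exact div_neg_of_neg_of_pos (mul_neg_of_pos_of_neg hsin₁ hsin₂) (mul_pos hsinθ hsin2θ)

theorem exists_nat_div_add_two_lt_le_div_add_one {a x : ℝ} (ha : 0 < a) (hx : 0 < x)
    (hxa : x < a / 2) : ∃ ν : ℕ, 1 ≤ ν ∧ a / (ν + 2) < x ∧ x ≤ a / (ν + 1) := by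
  set n := ⌊a / x⌋₊
  have hn2 : 2 ≤ n := Nat.le_floor <| by
    rw [Nat.cast_two, le_div_iff₀ hx]
    linarith
  have hn2' : (2 : ℝ) ≤ n := by exact_mod_cast hn2
  refine ⟨n - 1, by omega, ?_, ?_⟩
  all_goals rw [Nat.cast_sub (by omega), Nat.cast_one]
  · rw [div_lt_iff₀ (by linarith), ← div_lt_iff₀' hx]
    linarith [Nat.lt_floor_add_one (a / x)]
  · rw [le_div_iff₀ (by linarith), ← le_div_iff₀' hx]
    linarith [Nat.floor_le (div_pos ha hx).le]

theorem le_pi_div_of_symSqEigenvalue_nonneg {m : ℕ} {θ : ℝ} (hθ₀ : 0 < θ) (hθ : θ < π / 2)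
    (hexc : ∀ ν : ℕ, 1 ≤ ν → ν ≤ m → θ ≠ π / (ν + 1))
    (hpos : ∀ ν : ℕ, 1 ≤ ν → ν ≤ m → 0 ≤ symSqEigenvalue ν θ) :
    θ ≤ π / (m + 2) := by
  by_contra! hlt
  obtain ⟨ν, hν, hlo, hhi⟩ := exists_nat_div_add_two_lt_le_div_add_one pi_pos hθ₀ hθ
  have hνm : ν ≤ m := by
    have : π / (m + 2) < π / (ν + 1) := hlt.trans_le hhi
    rw [div_lt_div_iff_of_pos_left pi_pos (by positivity) (by positivity)] at this
    exact Nat.lt_succ_iff.mp (by exact_mod_cast (by linarith : (ν : ℝ) < m + 1))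
  exact (symSqEigenvalue_neg hν hlo (hhi.lt_of_ne (hexc ν hν hνm))).not_ge (hpos ν hν hνm)

theorem symSq_first_window_lower_bound_general (m : ℕ) (θ : ℝ)
    (hθ : θ ∈ Set.Ioo 0 Real.pi) (h2θ : Real.sin ((2 : ℝ) * θ) ≠ 0)
    (hexc : ∀ k : ℕ, 1 ≤ k → k ≤ m →
      θ ≠ Real.pi / ((k : ℝ) + 1) ∧ θ ≠ Real.pi - Real.pi / ((k : ℝ) + 1))
    (hpos : ∀ ν : ℕ, 1 ≤ ν → ν ≤ m →
      0 ≤ Real.sin (((ν : ℝ) + 1) * θ) * Real.sin (((ν : ℝ) + 2) * θ) /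
          (Real.sin θ * Real.sin (2 * θ))) :
    Real.sin (3 * θ) / Real.sin θ ≥ 3 - 4 * Real.sin (Real.pi / ((m : ℝ) + 2)) ^ 2 := by
  obtain ⟨hθ₀, hθπ⟩ := hθ
  have hθ2 : θ ≠ π / 2 := by
    rintro rfl
    exact h2θ (by rw [mul_div_cancel₀ _ two_ne_zero, sin_pi])
  obtain ⟨φ, hφ₀, hφm, hsin⟩ : ∃ φ, 0 < φ ∧ φ ≤ π / (m + 2) ∧ sin φ = sin θ := by
    rcases hθ2.lt_or_gt with h | h
    · exact ⟨θ, hθ₀, le_pi_div_of_symSqEigenvalue_nonneg hθ₀ h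
        (fun k hk hkm => (hexc k hk hkm).1) hpos, rfl⟩
    · refine ⟨π - θ, by linarith, le_pi_div_of_symSqEigenvalue_nonneg (by linarith) (by linarith)
        (fun k hk hkm heq => (hexc k hk hkm).2 (by linarith)) fun ν hν hνm => ?_, sin_pi_sub θ⟩
      rw [symSqEigenvalue_pi_sub]
      exact hpos ν hν hνm
  have hsinθ : 0 < sin θ := sin_pos_of_pos_of_lt_pi hθ₀ hθπ
  have hmono : sin φ ≤ sin (π / (m + 2)) :=
    sin_le_sin_of_le_of_le_pi_div_two (by linarith [pi_pos])
      (div_le_div_of_nonneg_left pi_pos.le two_pos (by linarith [m.cast_nonneg (α := ℝ)])) hφm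
  have hsin3 : sin (3 * θ) / sin θ = 3 - 4 * sin θ ^ 2 := by
    rw [sin_three_mul]
    field_simp
  rw [ge_iff_le, hsin3, ← hsin]
  gcongr
  exact hsin ▸ hsinθ.le

theorem symSq_first_window_lower_bound (m : ℕ) (hm : 1 ≤ m) (θ : ℝ)
    (hθ : θ ∈ Set.Ioo 0 Real.pi) (h2θ : Real.sin ((2 : ℝ) * θ) ≠ 0)
    (hexc : ∀ k : ℕ, 1 ≤ k → k ≤ m →
      θ ≠ Real.pi / ((k : ℝ) + 1) ∧ θ ≠ Real.pi - Real.pi / ((k : ℝ) + 1))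
    (hpos : ∀ ν : ℕ, 1 ≤ ν → ν ≤ m →
      0 ≤ Real.sin (((ν : ℝ) + 1) * θ) * Real.sin (((ν : ℝ) + 2) * θ) /
          (Real.sin θ * Real.sin (2 * θ))) :
    Real.sin (3 * θ) / Real.sin θ ≥ 3 - 4 * Real.sin (Real.pi / ((m : ℝ) + 2)) ^ 2 :=
  symSq_first_window_lower_bound_general m θ hθ h2θ hexc hpos
end

section
/- Let m ≥ 1 be an integer, C_m ≥ 0 a real constant, and let 0 < P ≤ X/2 be real numbers. Let w : ℝ → ℝ be m times continuously differentiable with w(x) = 0 for x ∉ [P, X+P], w(x) = 1 for x ∈ [2P, X], 0 ≤ w(x) ≤ 1 for all x, and |w^{(m)}(x)| ≤ C_m·P^{−m} for all x. Then there exists a constant C, depending only on m and C_m, such that for every s ∈ ℂ with 0 < Re(s) ≤ 2, the Mellin transform satisfies |𝑤̃(s)| ≤ C · P · X^{Re(s) − 1} · (X/(|s|·P))^m. -/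
/-!
Integrating by parts `m` times moves `m` derivatives onto `w` at the cost of the factor
`s (s + 1) ⋯ (s + m - 1)`, whose modulus is at least `‖s‖ ^ m` when `0 ≤ re s`. As `w` is constant
on `[2P, X]`, its `m`-th derivative lives on two intervals of length `P`, where it is at most
`C_m / P ^ m` and `x ^ (re s + m - 1) ≤ (2X) ^ (re s + m - 1)`.
-/

open MeasureTheory Set Function Finset

section Mellin

variable {E : Type*} [NormedAddCommGroup E] [NormedSpace ℂ E]

theorem mellin_eq_intervalIntegral {f : ℝ → E} {a b : ℝ} (ha : 0 ≤ a)
    (hf : support f ⊆ Ioc a b) (s : ℂ) :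
    mellin f s = ∫ t in a..b, (t : ℂ) ^ (s - 1) • f t := by
  have hsupp : support (fun t : ℝ => (t : ℂ) ^ (s - 1) • f t) ⊆ Ioc a b :=
    (support_smul_subset_right _ _).trans hf
  rw [intervalIntegral.integral_eq_integral_of_support_subset hsupp, mellin]
  refine setIntegral_eq_integral_of_forall_compl_eq_zero fun t ht => ?_
  exact notMem_support.mp fun h => ht (ha.trans_lt (hsupp h).1)

theorem smul_mellin_eq_neg_mellin_deriv [CompleteSpace E] {f : ℝ → E} {a b : ℝ} {s : ℂ}
    (hf : ContDiff ℝ 1 f) (ha : 0 < a) (hsupp : tsupport f ⊆ Ioo a b) (hs : s ≠ 0) :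
    s • mellin f s = -mellin (deriv f) (s + 1) := by
  rcases le_or_gt b a with hba | hab
  · have hf0 : f = 0 := tsupport_eq_empty_iff.mp <| subset_empty_iff.mp <|
      hsupp.trans (Ioo_eq_empty hba.not_gt).subset
    simp [hf0, mellin]
  have hIoc : tsupport f ⊆ Ioc a b := hsupp.trans Ioo_subset_Ioc_self
  rw [mellin_eq_intervalIntegral ha.le ((subset_tsupport f).trans hIoc),
    mellin_eq_intervalIntegral ha.le (support_deriv_subset.trans hIoc), add_sub_cancel_right]
  have hpos : ∀ x ∈ uIcc a b, x ≠ 0 := fun x hx =>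
    (ha.trans_le (uIcc_of_le hab.le ▸ hx).1).ne'
  have hpow : ∀ x ∈ uIcc a b,
      HasDerivAt (fun t : ℝ => (t : ℂ) ^ s / s) ((x : ℂ) ^ (s - 1)) x := fun x hx => by
    simpa using hasDerivAt_ofReal_cpow_const' (hpos x hx) (r := s - 1) (by simpa using hs)
  have hpow_int : IntervalIntegrable (fun x : ℝ => (x : ℂ) ^ (s - 1)) volume a b :=
    ContinuousOn.intervalIntegrable fun x hx =>
      (Complex.continuousAt_ofReal_cpow_const x _ (Or.inr (hpos x hx))).continuousWithinAt
  have hibp := intervalIntegral.integral_smul_deriv_eq_deriv_smul hpow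
    (fun x _ => (hf.differentiable one_ne_zero x).hasDerivAt)
    hpow_int ((hf.continuous_deriv le_rfl).intervalIntegrable a b)
  have hfa : f a = 0 := image_eq_zero_of_notMem_tsupport fun h => (hsupp h).1.false
  have hfb : f b = 0 := image_eq_zero_of_notMem_tsupport fun h => (hsupp h).2.false
  simp only [hfa, hfb, smul_zero, sub_zero, zero_sub, div_eq_inv_mul, mul_smul,
    intervalIntegral.integral_smul] at hibp
  rw [← neg_eq_iff_eq_neg.mpr hibp, smul_neg, smul_inv_smul₀ hs]

theorem prod_smul_mellin_eq_mellin_iteratedDeriv [CompleteSpace E] {f : ℝ → E} {a b : ℝ}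
    {m : ℕ} (hf : ContDiff ℝ m f) (ha : 0 < a) (hsupp : tsupport f ⊆ Ioo a b) {s : ℂ}
    (hs : 0 < s.re) :
    (∏ j ∈ range m, (s + j)) • mellin f s = (-1 : ℂ) ^ m • mellin (iteratedDeriv m f) (s + m) := by
  induction m generalizing f s with
  | zero => simp
  | succ m ih =>
    have hs0 : s ≠ 0 := fun h => by simp [h] at hs
    have hderiv := ih (f := deriv f) (s := s + 1) hf.deriv'
      (tsupport_deriv_subset.trans hsupp) (by rw [Complex.add_re, Complex.one_re]; linarith)
    rw [prod_range_succ', Nat.cast_zero, add_zero, mul_smul,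
      smul_mellin_eq_neg_mellin_deriv (hf.of_le (by simp)) ha hsupp hs0, smul_neg]
    simp only [Nat.cast_succ, ← add_assoc, add_right_comm _ _ (1 : ℂ)] at hderiv ⊢
    rw [hderiv, iteratedDeriv_succ', pow_succ, mul_comm, mul_smul, neg_one_smul]

theorem norm_mellin_le_of_support_subset {g : ℝ → E} {S : Set ℝ} {b M : ℝ} {s : ℂ}
    (hS : S ⊆ Ioc 0 b) (hg : support g ⊆ S) (hgM : ∀ x ∈ S, ‖g x‖ ≤ M) (hs : 1 ≤ s.re) :
    ‖mellin g s‖ ≤ M * b ^ (s.re - 1) * volume.real S := by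
  have hsupp : support (fun t : ℝ => (t : ℂ) ^ (s - 1) • g t) ⊆ S :=
    (support_smul_subset_right _ _).trans hg
  have hfin : volume S < ⊤ := (measure_mono (hS.trans Ioc_subset_Icc_self)).trans_lt
    measure_Icc_lt_top
  rw [mellin, setIntegral_eq_of_subset_of_forall_sdiff_eq_zero measurableSet_Ioi
    (hS.trans Ioc_subset_Ioi_self) fun t ht => notMem_support.mp fun h => ht.2 (hsupp h)]
  refine norm_setIntegral_le_of_norm_le_const hfin fun x hx => ?_
  obtain ⟨hx0, hxb⟩ := hS hx
  rw [norm_smul, Complex.norm_cpow_eq_rpow_re_of_pos hx0, Complex.sub_re, Complex.one_re,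
    mul_comm M]
  exact mul_le_mul (Real.rpow_le_rpow hx0.le hxb (by linarith)) (hgM x hx) (norm_nonneg _)
    (Real.rpow_nonneg (hx0.trans_le hxb).le _)

end Mellin

theorem iteratedDeriv_eq_zero_of_eqOn_const {𝕜 F : Type*} [NontriviallyNormedField 𝕜]
    [NormedAddCommGroup F] [NormedSpace 𝕜 F] {f : 𝕜 → F} {c : F} {U : Set 𝕜} {k : ℕ} {x : 𝕜}
    (hU : IsOpen U) (hf : EqOn f (fun _ => c) U) (hk : k ≠ 0) (hx : x ∈ U) :
    iteratedDeriv k f x = 0 := by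
  rw [hf.iteratedDeriv_of_isOpen hU k hx, iteratedDeriv_const, if_neg hk]

theorem support_iteratedDeriv_subset_of_eqOn_const {F : Type*} [NormedAddCommGroup F]
    [NormedSpace ℝ F] {f : ℝ → F} {a b c d : ℝ} {y : F} {k : ℕ} (hf : support f ⊆ Icc a d)
    (hplateau : EqOn f (fun _ => y) (Icc b c)) (hk : k ≠ 0) :
    support (iteratedDeriv k f) ⊆ Icc a b ∪ Icc c d := by
  intro x hx
  by_contra hS
  apply hx
  by_cases hxad : x ∈ Icc a d
  · refine iteratedDeriv_eq_zero_of_eqOn_const isOpen_Ioo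
      (hplateau.mono Ioo_subset_Icc_self) hk ?_
    simp only [mem_union, Set.mem_Icc, not_or, not_and, not_le] at hS
    exact ⟨hS.1 hxad.1, lt_of_not_ge fun h => (hS.2 h).not_ge hxad.2⟩
  · exact iteratedDeriv_eq_zero_of_eqOn_const isClosed_Icc.isOpen_compl
      (fun z hz => notMem_support.mp fun h => hz (hf h)) hk hxad

namespace Complex

theorem norm_le_norm_add_natCast {s : ℂ} (hs : 0 ≤ s.re) (n : ℕ) : ‖s‖ ≤ ‖s + n‖ := by
  rw [norm_def, norm_def]
  apply Real.sqrt_le_sqrt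
  simp only [normSq_apply, add_re, add_im, natCast_re, natCast_im, add_zero]
  nlinarith [n.cast_nonneg (α := ℝ)]

theorem pow_norm_le_norm_prod_add_natCast {s : ℂ} (hs : 0 ≤ s.re) (m : ℕ) :
    ‖s‖ ^ m ≤ ‖∏ j ∈ range m, (s + j)‖ := by
  calc ‖s‖ ^ m = ∏ _j ∈ range m, ‖s‖ := by rw [prod_const, card_range]
    _ ≤ ‖∏ j ∈ range m, (s + j)‖ := by
      rw [norm_prod]
      exact prod_le_prod (fun _ _ => norm_nonneg _) fun j _ => norm_le_norm_add_natCast hs j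

end Complex

theorem add_rpow_le_two_pow_mul_rpow {x y e : ℝ} {n : ℕ} (hy : 0 ≤ y) (hyx : y ≤ x)
    (he : 0 ≤ e) (hen : e ≤ n) : (x + y) ^ e ≤ 2 ^ n * x ^ e := by
  have hx : 0 ≤ x := hy.trans hyx
  calc (x + y) ^ e ≤ (2 * x) ^ e := Real.rpow_le_rpow (by linarith) (by linarith) he
    _ = 2 ^ e * x ^ e := Real.mul_rpow zero_le_two hx
    _ ≤ 2 ^ n * x ^ e := by
      gcongr
      exact_mod_cast Real.rpow_le_rpow_of_exponent_le one_le_two hen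

theorem pow_norm_mul_norm_mellin_le_of_eqOn_const {E : Type*} [NormedAddCommGroup E]
    [NormedSpace ℂ E] [CompleteSpace E] {f : ℝ → E} {m : ℕ} {a b c d M : ℝ} {y : E} {s : ℂ}
    (hf : ContDiff ℝ m f) (ha : 0 < a) (hab : a ≤ b) (hbc : b ≤ c) (hcd : c ≤ d)
    (hsupp : support f ⊆ Icc a d) (hplateau : EqOn f (fun _ => y) (Icc b c))
    (hfM : ∀ x, ‖iteratedDeriv m f x‖ ≤ M)
    (hm : m ≠ 0) (hs : 0 < s.re) :
    ‖s‖ ^ m * ‖mellin f s‖ ≤ M * d ^ (s.re + m - 1) * ((b - a) + (d - c)) := by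
  have htsupp : tsupport f ⊆ Ioo (a / 2) (d + 1) := fun x hx => by
    obtain ⟨hax, hxd⟩ := closure_minimal hsupp isClosed_Icc hx
    exact ⟨by linarith, by linarith⟩
  have hS : Icc a b ∪ Icc c d ⊆ Ioc 0 d := union_subset
    (fun x hx => ⟨ha.trans_le hx.1, hx.2.trans (hbc.trans hcd)⟩)
    (fun x hx => ⟨ha.trans_le (hab.trans (hbc.trans hx.1)), hx.2⟩)
  have hM : 0 ≤ M := (norm_nonneg _).trans (hfM 0)
  calc ‖s‖ ^ m * ‖mellin f s‖ ≤ ‖∏ j ∈ range m, (s + j)‖ * ‖mellin f s‖ := by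
        gcongr; exact Complex.pow_norm_le_norm_prod_add_natCast hs.le m
    _ = ‖mellin (iteratedDeriv m f) (s + m)‖ := by
        rw [← norm_smul, prod_smul_mellin_eq_mellin_iteratedDeriv hf (half_pos ha) htsupp hs,
          norm_smul, norm_pow, norm_neg, norm_one, one_pow, one_mul]
    _ ≤ M * d ^ ((s + m).re - 1) * volume.real (Icc a b ∪ Icc c d) :=
        norm_mellin_le_of_support_subset hS
          (support_iteratedDeriv_subset_of_eqOn_const hsupp hplateau hm) (fun x _ => hfM x) (by
            have : (1 : ℝ) ≤ m := Nat.one_le_cast.mpr (Nat.one_le_iff_ne_zero.mpr hm)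
            simp only [Complex.add_re, Complex.natCast_re]; linarith)
    _ ≤ M * d ^ (s.re + m - 1) * ((b - a) + (d - c)) := by
        rw [Complex.add_re, Complex.natCast_re]
        refine mul_le_mul_of_nonneg_left ((measureReal_union_le _ _).trans ?_)
          (mul_nonneg hM (Real.rpow_nonneg (by linarith) _))
        rw [Real.volume_real_Icc_of_le hab, Real.volume_real_Icc_of_le hcd]

theorem mellin_transform_cutoff_bound_general (m : ℕ) (hm : 1 ≤ m) (Cm : ℝ) :
    ∃ C : ℝ, ∀ (P X : ℝ), 0 < P → P ≤ X / 2 → ∀ w : ℝ → ℝ,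
      ContDiff ℝ m w →
      (∀ x : ℝ, x ∉ Set.Icc P (X + P) → w x = 0) →
      (∀ x ∈ Set.Icc (2 * P) X, w x = 1) →
      (∀ x : ℝ, 0 ≤ w x ∧ w x ≤ 1) →
      (∀ x : ℝ, |iteratedDeriv m w x| ≤ Cm / P ^ m) →
      ∀ s : ℂ, 0 < s.re → s.re ≤ 2 →
        ‖∫ x in Set.Ioi (0 : ℝ), (w x : ℂ) * (x : ℂ) ^ (s - 1)‖ ≤
          C * P * X ^ (s.re - 1) * (X / (‖s‖ * P)) ^ m := by
  refine ⟨Cm * 2 ^ (m + 2), fun P X hP hPX w hw hw0 hw1 _ hwm s hs hs2 => ?_⟩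
  set f : ℝ → ℂ := Complex.ofRealLI ∘ w
  have hf_norm : ∀ x, ‖iteratedDeriv m f x‖ ≤ Cm / P ^ m := fun x => by
    rw [← norm_iteratedFDeriv_eq_norm_iteratedDeriv,
      LinearIsometry.norm_iteratedFDeriv_comp_left _ hw.contDiffAt le_rfl,
      norm_iteratedFDeriv_eq_norm_iteratedDeriv]
    exact hwm x
  have key := pow_norm_mul_norm_mellin_le_of_eqOn_const (b := 2 * P) (c := X) (d := X + P)
    (y := 1) (Complex.ofRealCLM.contDiff.comp hw) hP (by linarith) (by linarith) (by linarith)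
    (fun x hx => by_contra fun h => hx (by simp [hw0 x h]))
    (fun x hx => by simp [hw1 x hx]) hf_norm (by omega) hs
  have hmellin : ∫ x in Ioi (0 : ℝ), (w x : ℂ) * (x : ℂ) ^ (s - 1) = mellin f s := by
    simp [mellin, f, mul_comm]
  have hs0 : 0 < ‖s‖ := norm_pos_iff.mpr fun h => by simp [h] at hs
  have hM : 0 ≤ Cm / P ^ m := (abs_nonneg _).trans (hwm 0)
  have hX : 0 < X := by linarith
  have hm' : (1 : ℝ) ≤ m := by exact_mod_cast hm
  rw [hmellin, ← mul_le_mul_iff_right₀ (pow_pos hs0 m)]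
  calc ‖s‖ ^ m * ‖mellin f s‖ ≤ Cm / P ^ m * (X + P) ^ (s.re + m - 1) * (2 * P) :=
        key.trans_eq (by ring)
    _ ≤ Cm / P ^ m * (2 ^ (m + 1) * X ^ (s.re + m - 1)) * (2 * P) := by
        gcongr
        exact add_rpow_le_two_pow_mul_rpow hP.le (by linarith) (by linarith)
          (by push_cast; linarith)
    _ = ‖s‖ ^ m * (Cm * 2 ^ (m + 2) * P * X ^ (s.re - 1) * (X / (‖s‖ * P)) ^ m) := by
        rw [add_sub_right_comm, Real.rpow_add_natCast hX.ne', div_pow, mul_pow]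
        field_simp
        ring

theorem mellin_transform_cutoff_bound (m : ℕ) (hm : 1 ≤ m) (Cm : ℝ) (hCm : 0 ≤ Cm) :
    ∃ C : ℝ, ∀ (P X : ℝ), 0 < P → P ≤ X / 2 → ∀ w : ℝ → ℝ,
      ContDiff ℝ m w →
      (∀ x : ℝ, x ∉ Set.Icc P (X + P) → w x = 0) →
      (∀ x ∈ Set.Icc (2 * P) X, w x = 1) →
      (∀ x : ℝ, 0 ≤ w x ∧ w x ≤ 1) →
      (∀ x : ℝ, |iteratedDeriv m w x| ≤ Cm / P ^ m) →
      ∀ s : ℂ, 0 < s.re → s.re ≤ 2 →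
        ‖∫ x in Set.Ioi (0 : ℝ), (w x : ℂ) * (x : ℂ) ^ (s - 1)‖ ≤
          C * P * X ^ (s.re - 1) * (X / (‖s‖ * P)) ^ m :=
  mellin_transform_cutoff_bound_general m hm Cm
end

section
/- Let w : ℝ → ℂ be infinitely differentiable with compact support contained in (0, ∞), let b ∈ ℝ, and let f : ℕ≥1 → ℂ satisfy ∑_{n≥1} |f(n)|·n^{−b} < ∞. Define the Dirichlet series F(s) = ∑_{n≥1} f(n)·n^{−s} for Re(s) ≥ b. Then the function t ↦ 𝑤̃(b+it)·F(b+it) is Lebesgue integrable on ℝ and ∑_{n≥1} f(n)·w(n) = (1/(2π)) ∫_{−∞}^{∞} 𝑤̃(b+it)·F(b+it) dt. -/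
open MeasureTheory

open scoped FourierTransform

/-- Fourier transform of a smooth compactly supported function is integrable. -/
lemma integrable_fourierIntegral_of_hasCompactSupport {g : ℝ → ℂ}
    (hg : ContDiff ℝ (⊤ : ℕ∞) g) (hgc : HasCompactSupport g) : Integrable (𝓕 g) := by
  have decay : ∀ (k n : ℕ), ∃ C, ∀ x : ℝ, ‖x‖ ^ k * ‖iteratedFDeriv ℝ n g x‖ ≤ C := by
    intro k n
    have h1 : Continuous fun x : ℝ => ‖x‖ ^ k * ‖iteratedFDeriv ℝ n g x‖ :=
      (continuous_norm.pow k).mul (hg.continuous_iteratedFDeriv (by exact_mod_cast le_top)).norm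
    have h2 : HasCompactSupport fun x : ℝ => ‖x‖ ^ k * ‖iteratedFDeriv ℝ n g x‖ :=
      (((hgc.iteratedFDeriv n).norm)).mul_left
    simpa using h1.bounded_above_of_compact_support h2
  let gS : SchwartzMap ℝ ℂ := ⟨g, hg.of_le (by simp), decay⟩
  have h : Integrable (⇑(FourierTransform.fourierCLE ℂ (SchwartzMap ℝ ℂ) gS)) := SchwartzMap.integrable _
  exact h

theorem smoothed_perron_formula (w : ℝ → ℂ) (hw : ContDiff ℝ (⊤ : ℕ∞) w)
    (hcs : HasCompactSupport w) (hsupp : tsupport w ⊆ Set.Ioi (0 : ℝ))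
    (b : ℝ) (f : ℕ → ℂ)
    (hf : Summable fun n : ℕ => ‖f (n + 1)‖ * ((n + 1 : ℕ) : ℝ) ^ (-b)) :
    Integrable (fun t : ℝ =>
        (∫ x in Set.Ioi (0 : ℝ), w x * (x : ℂ) ^ ((b : ℂ) + t * Complex.I - 1)) *
          ∑' n : ℕ, f (n + 1) * ((n + 1 : ℕ) : ℂ) ^ (-((b : ℂ) + t * Complex.I))) ∧
      ∑' n : ℕ, f (n + 1) * w ((n + 1 : ℕ) : ℝ) =
        (1 / (2 * (Real.pi : ℂ))) *
          ∫ t : ℝ,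
            (∫ x in Set.Ioi (0 : ℝ), w x * (x : ℂ) ^ ((b : ℂ) + t * Complex.I - 1)) *
              ∑' n : ℕ, f (n + 1) * ((n + 1 : ℕ) : ℂ) ^ (-((b : ℂ) + t * Complex.I)) := by
  have pi_pos := Real.pi_pos
  have h2π : (2 * Real.pi : ℝ) ≠ 0 := by positivity
  have hwz : ∀ x : ℝ, x ∉ tsupport w → w x = 0 := fun x hx => image_eq_zero_of_notMem_tsupport hx
  -- the auxiliary function on the Fourier side
  set g : ℝ → ℂ := fun u => Real.exp (-b * u) • w (Real.exp (-u)) with hgdef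
  have hgsmooth : ContDiff ℝ (⊤ : ℕ∞) g := by
    apply ContDiff.fun_smul
    · exact Real.contDiff_exp.comp (contDiff_const.mul contDiff_id)
    · exact hw.comp (Real.contDiff_exp.comp contDiff_neg)
  have hgc : HasCompactSupport g := by
    apply HasCompactSupport.of_support_subset_isCompact
      (hcs.image_of_continuousOn
        (((Real.continuousOn_log).mono (by
          intro x hx
          simpa using (ne_of_gt (hsupp hx)))).neg))
    intro u hu
    have hwu : w (Real.exp (-u)) ≠ 0 := by
      intro h
      apply hu
      simp [hgdef, h]
    refine ⟨Real.exp (-u), subset_tsupport w hwu, ?_⟩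
    simp
  have hFg : Integrable (𝓕 g) := integrable_fourierIntegral_of_hasCompactSupport hgsmooth hgc
  -- Mellin transform equals Fourier transform of g
  have hMeq : ∀ t : ℝ, mellin w ((b : ℂ) + t * Complex.I) = 𝓕 g (t / (2 * Real.pi)) := by
    intro t
    rw [mellin_eq_fourier]
    norm_num [hgdef]
  have hMint : Integrable (fun t : ℝ => mellin w ((b : ℂ) + t * Complex.I)) := by
    rw [show (fun t : ℝ => mellin w ((b : ℂ) + t * Complex.I))
        = fun t : ℝ => 𝓕 g (t / (2 * Real.pi)) from funext hMeq]
    exact hFg.comp_div h2π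
  -- Mellin convergence
  have hMC : MellinConvergent w b := by
    apply Integrable.integrableOn
    apply Continuous.integrable_of_hasCompactSupport
    · rw [continuous_iff_continuousAt]
      intro x
      by_cases hx : x ∈ tsupport w
      · have hx0 : x ≠ 0 := ne_of_gt (hsupp hx)
        exact (Complex.continuousAt_ofReal_cpow_const x _ (Or.inr hx0)).smul hw.continuous.continuousAt
      · have hev : (fun y : ℝ => ((y : ℂ) ^ ((b : ℂ) - 1)) • w y) =ᶠ[nhds x] fun _ => 0 := by
          filter_upwards [(isClosed_tsupport w).isOpen_compl.mem_nhds hx] with y hy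
          simp [hwz y hy]
        exact ContinuousAt.congr continuousAt_const hev.symm
    · apply HasCompactSupport.of_support_subset_isCompact hcs
      intro x hx
      by_contra hxs
      exact hx (by simp [hwz x hxs])
  have hVI : Complex.VerticalIntegrable (mellin w) b := hMint
  -- Mellin inversion at positive reals
  have hinv : ∀ x : ℝ, 0 < x →
      (∫ t : ℝ, ((x : ℂ) ^ (-((b : ℂ) + t * Complex.I))) • mellin w ((b : ℂ) + t * Complex.I))
        = (2 * Real.pi : ℝ) • w x := by
    intro x hx
    have h := mellinInv_mellin_eq b w hx hMC hVI hw.continuous.continuousAt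
    rw [mellinInv] at h
    rw [← h, smul_smul]
    rw [mul_one_div, div_self h2π, one_smul]
  -- the statement's vertical-line Mellin transform
  have hW : ∀ t : ℝ, (∫ x in Set.Ioi (0 : ℝ), w x * (x : ℂ) ^ ((b : ℂ) + t * Complex.I - 1))
      = mellin w ((b : ℂ) + t * Complex.I) := by
    intro t
    rw [mellin]
    exact setIntegral_congr_fun measurableSet_Ioi fun x _ => by rw [smul_eq_mul, mul_comm]
  -- norms of the Dirichlet terms
  have hnorm : ∀ (n : ℕ) (t : ℝ),
      ‖f (n + 1) * ((n + 1 : ℕ) : ℂ) ^ (-((b : ℂ) + t * Complex.I))‖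
        = ‖f (n + 1)‖ * ((n + 1 : ℕ) : ℝ) ^ (-b) := by
    intro n t
    rw [norm_mul]
    congr 1
    have h0 : (0 : ℝ) < ((n + 1 : ℕ) : ℝ) := by positivity
    rw [show ((n + 1 : ℕ) : ℂ) = (((n + 1 : ℕ) : ℝ) : ℂ) by push_cast; ring,
      Complex.norm_cpow_eq_rpow_re_of_pos h0]
    congr 1
    simp
  -- continuity of the Dirichlet series
  have htermcont : ∀ n : ℕ,
      Continuous fun t : ℝ => f (n + 1) * ((n + 1 : ℕ) : ℂ) ^ (-((b : ℂ) + t * Complex.I)) := by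
    intro n
    apply continuous_const.mul
    apply Continuous.cpow continuous_const (by fun_prop)
    intro t
    exact Complex.mem_slitPlane_iff.mpr (Or.inl (by simp only [Complex.natCast_re]; positivity))
  have hScont : Continuous fun t : ℝ =>
      ∑' n : ℕ, f (n + 1) * ((n + 1 : ℕ) : ℂ) ^ (-((b : ℂ) + t * Complex.I)) :=
    continuous_tsum htermcont hf fun n t => (hnorm n t).le
  have hSbound : ∀ t : ℝ,
      ‖∑' n : ℕ, f (n + 1) * ((n + 1 : ℕ) : ℂ) ^ (-((b : ℂ) + t * Complex.I))‖
        ≤ ∑' n : ℕ, ‖f (n + 1)‖ * ((n + 1 : ℕ) : ℝ) ^ (-b) := by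
    intro t
    have hsummable : Summable fun n : ℕ =>
        ‖f (n + 1) * ((n + 1 : ℕ) : ℂ) ^ (-((b : ℂ) + t * Complex.I))‖ := by
      simpa only [hnorm] using hf
    calc ‖_‖ ≤ ∑' n : ℕ, ‖f (n + 1) * ((n + 1 : ℕ) : ℂ) ^ (-((b : ℂ) + t * Complex.I))‖ :=
          norm_tsum_le_tsum_norm hsummable
      _ = _ := tsum_congr fun n => hnorm n t
  -- integrability (first conjunct)
  have hInt : Integrable (fun t : ℝ =>
      (∫ x in Set.Ioi (0 : ℝ), w x * (x : ℂ) ^ ((b : ℂ) + t * Complex.I - 1)) *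
        ∑' n : ℕ, f (n + 1) * ((n + 1 : ℕ) : ℂ) ^ (-((b : ℂ) + t * Complex.I))) := by
    simp only [hW]
    have := hMint.bdd_mul hScont.aestronglyMeasurable (Filter.Eventually.of_forall hSbound)
    simpa [mul_comm] using this
  refine ⟨hInt, ?_⟩
  -- the summand functions
  set G : ℕ → ℝ → ℂ := fun n t =>
    f (n + 1) * ((n + 1 : ℕ) : ℂ) ^ (-((b : ℂ) + t * Complex.I))
      * mellin w ((b : ℂ) + t * Complex.I) with hGdef
  have hGint : ∀ n : ℕ, Integrable (G n) :=
    fun n => hMint.bdd_mul (htermcont n).aestronglyMeasurable (Filter.Eventually.of_forall fun t => (hnorm n t).le)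
  have hGnorm : ∀ n : ℕ, (∫ t : ℝ, ‖G n t‖)
      = ‖f (n + 1)‖ * ((n + 1 : ℕ) : ℝ) ^ (-b)
        * ∫ t : ℝ, ‖mellin w ((b : ℂ) + t * Complex.I)‖ := by
    intro n
    rw [← integral_const_mul]
    exact integral_congr_ae (Filter.Eventually.of_forall fun t => by
      rw [hGdef]; simp only []; rw [norm_mul, hnorm n t])
  have hGsum : Summable fun n : ℕ => ∫ t : ℝ, ‖G n t‖ := by
    simp only [hGnorm]
    exact hf.mul_right _
  have key := integral_tsum_of_summable_integral_norm hGint hGsum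
  -- compute each integral via Mellin inversion
  have hGeval : ∀ n : ℕ, (∫ t : ℝ, G n t)
      = (2 * Real.pi : ℂ) * (f (n + 1) * w ((n + 1 : ℕ) : ℝ)) := by
    intro n
    have hpos : (0 : ℝ) < ((n + 1 : ℕ) : ℝ) := by positivity
    have h := hinv ((n + 1 : ℕ) : ℝ) hpos
    have hcast : ((((n + 1 : ℕ) : ℝ)) : ℂ) = ((n + 1 : ℕ) : ℂ) := by push_cast; ring
    rw [hcast] at h
    calc (∫ t : ℝ, G n t)
        = f (n + 1) * ∫ t : ℝ, ((n + 1 : ℕ) : ℂ) ^ (-((b : ℂ) + t * Complex.I))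
            • mellin w ((b : ℂ) + t * Complex.I) := by
          rw [← integral_const_mul]
          exact integral_congr_ae (Filter.Eventually.of_forall fun t => by
            rw [hGdef]; simp only [smul_eq_mul]; ring)
      _ = f (n + 1) * ((2 * Real.pi : ℝ) • w ((n + 1 : ℕ) : ℝ)) := by rw [h]
      _ = (2 * Real.pi : ℂ) * (f (n + 1) * w ((n + 1 : ℕ) : ℝ)) := by
          rw [Complex.real_smul]
          push_cast
          ring
  -- pointwise identity between ∑' G n and the integrand
  have hpoint : ∀ t : ℝ, (∑' n : ℕ, G n t)
      = mellin w ((b : ℂ) + t * Complex.I) *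
          ∑' n : ℕ, f (n + 1) * ((n + 1 : ℕ) : ℂ) ^ (-((b : ℂ) + t * Complex.I)) := by
    intro t
    rw [mul_comm, ← tsum_mul_right]
  -- put everything together
  have hsum : ∑' n : ℕ, (∫ t : ℝ, G n t)
      = (2 * Real.pi : ℂ) * ∑' n : ℕ, f (n + 1) * w ((n + 1 : ℕ) : ℝ) := by
    rw [tsum_congr hGeval, tsum_mul_left]
  have h2πC : (2 * (Real.pi : ℂ)) ≠ 0 := by
    simp [Real.pi_ne_zero]
  simp only [hW]
  rw [show (∫ t : ℝ, mellin w ((b : ℂ) + t * Complex.I) *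
      ∑' n : ℕ, f (n + 1) * ((n + 1 : ℕ) : ℂ) ^ (-((b : ℂ) + t * Complex.I)))
      = ∫ t : ℝ, ∑' n : ℕ, G n t from
    integral_congr_ae (Filter.Eventually.of_forall fun t => (hpoint t).symm)]
  rw [← key, hsum]
  rw [← mul_assoc]
  rw [one_div, inv_mul_cancel₀ (by exact_mod_cast h2πC), one_mul]
end

section
/- Let g, h : ℕ≥1 → ℝ be arithmetic functions and let X ≥ 1 be a real number. Suppose that g(1) = 1, that g(d) ≥ 0 for every d ≥ 1, and that ∑_{m ≤ t} h(m) ≥ 0 for every real t with 1 ≤ t ≤ X. Then ∑_{n ≤ X} (g ⋆ h)(n) ≥ ∑_{n ≤ X} h(n), where (g ⋆ h)(n) = ∑_{d | n} g(d)·h(n/d) is the Dirichlet convolution. -/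
/-! Exchanging the order of summation,
`∑_{n ≤ N} (g ⋆ h)(n) = ∑_{d ≤ N} g(d) ∑_{m ≤ N/d} h(m)`. For `N = ⌊X⌋` the inner sum runs
up to `⌊X/d⌋` with `1 ≤ X/d ≤ X`, so every term is nonnegative, and the term `d = 1` is
`∑_{m ≤ N} h(m)`. -/

open Finset

namespace ArithmeticFunction

variable {R : Type*}

def ofFun [Zero R] (f : ℕ → R) : ArithmeticFunction R :=
  ⟨fun n => if n = 0 then 0 else f n, if_pos rfl⟩

theorem ofFun_apply_of_ne_zero [Zero R] (f : ℕ → R) {n : ℕ} (hn : n ≠ 0) : ofFun f n = f n :=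
  if_neg hn

theorem ofFun_mul_ofFun_apply [Semiring R] (g h : ℕ → R) (n : ℕ) :
    (ofFun g * ofFun h) n = ∑ d ∈ n.divisors, g d * h (n / d) := by
  rw [mul_apply, Nat.sum_divisorsAntidiagonal (fun d m => ofFun g d * ofFun h m)]
  refine sum_congr rfl fun d hd => ?_
  have hd0 : d ≠ 0 := (Nat.pos_of_mem_divisors hd).ne'
  have hnd : n / d ≠ 0 := (Nat.div_pos (Nat.divisor_le hd) (Nat.pos_of_ne_zero hd0)).ne'
  rw [ofFun_apply_of_ne_zero g hd0, ofFun_apply_of_ne_zero h hnd]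

end ArithmeticFunction

open ArithmeticFunction

section Semiring

variable {R : Type*} [Semiring R]

theorem sum_Icc_sum_divisors_eq_sum_mul_sum (g h : ℕ → R) (N : ℕ) :
    ∑ n ∈ Icc 1 N, ∑ d ∈ n.divisors, g d * h (n / d) =
      ∑ d ∈ Icc 1 N, g d * ∑ m ∈ Icc 1 (N / d), h m := by
  have hIcc : ∀ k, Icc 1 k = Ioc 0 k := Icc_add_one_left_eq_Ioc 0
  simp only [← ofFun_mul_ofFun_apply, hIcc]
  rw [sum_Ioc_mul_eq_sum_sum]
  refine sum_congr rfl fun d hd => ?_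
  rw [ofFun_apply_of_ne_zero g (mem_Ioc.1 hd).1.ne']
  exact congrArg _ (sum_congr rfl fun m hm => ofFun_apply_of_ne_zero h (mem_Ioc.1 hm).1.ne')

variable [PartialOrder R] [IsOrderedRing R]

theorem sum_Icc_le_sum_Icc_sum_divisors {g h : ℕ → R} {N : ℕ} (hg1 : g 1 = 1)
    (hg : ∀ d, 1 ≤ d → 0 ≤ g d) (hh : ∀ d ∈ Icc 1 N, 0 ≤ ∑ m ∈ Icc 1 (N / d), h m) :
    ∑ n ∈ Icc 1 N, h n ≤ ∑ n ∈ Icc 1 N, ∑ d ∈ n.divisors, g d * h (n / d) := by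
  rw [sum_Icc_sum_divisors_eq_sum_mul_sum]
  obtain rfl | hN := N.eq_zero_or_pos
  · simp
  have hterm : ∀ d ∈ Icc 1 N, 0 ≤ g d * ∑ m ∈ Icc 1 (N / d), h m :=
    fun d hd => mul_nonneg (hg d (mem_Icc.1 hd).1) (hh d hd)
  calc ∑ n ∈ Icc 1 N, h n = g 1 * ∑ m ∈ Icc 1 (N / 1), h m := by rw [hg1, one_mul, Nat.div_one]
    _ ≤ ∑ d ∈ Icc 1 N, g d * ∑ m ∈ Icc 1 (N / d), h m :=
      single_le_sum hterm (mem_Icc.2 ⟨le_rfl, hN⟩)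

end Semiring

theorem dirichlet_convolution_positivity_transfer_general (g h : ℕ → ℝ) (X : ℝ)
    (hg1 : g 1 = 1) (hg : ∀ d : ℕ, 1 ≤ d → 0 ≤ g d)
    (hh : ∀ t : ℝ, 1 ≤ t → t ≤ X → 0 ≤ ∑ m ∈ Finset.Icc 1 ⌊t⌋₊, h m) :
    ∑ n ∈ Finset.Icc 1 ⌊X⌋₊, h n ≤
      ∑ n ∈ Finset.Icc 1 ⌊X⌋₊, ∑ d ∈ n.divisors, g d * h (n / d) := by
  refine sum_Icc_le_sum_Icc_sum_divisors hg1 hg fun d hd => ?_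
  obtain ⟨hd1, hdX⟩ := mem_Icc.1 hd
  have hd1' : (1 : ℝ) ≤ d := by exact_mod_cast hd1
  have hdX' : (d : ℝ) ≤ X := (Nat.le_floor_iff' (by omega)).1 hdX
  rw [← Nat.floor_div_natCast]
  refine hh (X / d) ((one_le_div (by positivity)).2 hdX') (div_le_self ?_ hd1')
  linarith

theorem dirichlet_convolution_positivity_transfer (g h : ℕ → ℝ) (X : ℝ) (hX : 1 ≤ X)
    (hg1 : g 1 = 1) (hg : ∀ d : ℕ, 1 ≤ d → 0 ≤ g d)
    (hh : ∀ t : ℝ, 1 ≤ t → t ≤ X → 0 ≤ ∑ m ∈ Finset.Icc 1 ⌊t⌋₊, h m) :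
    ∑ n ∈ Finset.Icc 1 ⌊X⌋₊, h n ≤
      ∑ n ∈ Finset.Icc 1 ⌊X⌋₊, ∑ d ∈ n.divisors, g d * h (n / d) :=
  dirichlet_convolution_positivity_transfer_general g h X hg1 hg hh
end

section
/- Let η ≥ 1 be an integer, N ≥ 1 an integer, and let χ : ℕ≥1 → ℝ be completely multiplicative with values in {−1, 0, 1}. For s ∈ ℂ define the Euler product P(s) = ∏_{p | N} [(1 − p^{−s})(1 − χ(p)·p^{−s})]^η · ∏_{p ∤ N} [(1 − p^{−s})^η · (1 − χ(p)·p^{−s})^η · (1 + η(1 + χ(p))·p^{−s})], the products running over primes. Then the product defining P(s) converges (is multipliable) for every s with Re(s) > 1/2, and P(1) > 0. -/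
/-!
At a prime `p ∤ N` the local factor is `∏ (1 + aᵢ z)` with `z = p ^ (-s)`, over the coefficients
`aᵢ ∈ {-1 (η times), -χ(p) (η times), η(1 + χ(p))}`, whose sum vanishes. The second-order bound
`‖∏ (1 + xᵢ) - 1 - ∑ xᵢ‖ ≤ exp (∑ ‖xᵢ‖) - 1 - ∑ ‖xᵢ‖` then gives `‖factor - 1‖ ≤ (4η ‖z‖)²`
once `4η ‖z‖ ≤ 1`, and `∑ₚ p ^ (-2 Re s)` converges for `Re s > 1/2`. At `s = 1` all factors are
positive reals close to `1` in summable fashion, so their product is the exponential of a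
convergent series of logarithms.
-/

open Filter Topology

namespace Multiset

variable {R : Type*} [NormedCommRing R]

theorem norm_prod_map_one_add_sub_one_sub_sum_le (m : Multiset R) :
    ‖(m.map (1 + ·)).prod - 1 - m.sum‖ ≤
      Real.exp (m.map (‖·‖)).sum - 1 - (m.map (‖·‖)).sum := by
  induction m using Multiset.induction_on with
  | empty => simp
  | cons x m ih =>
    simp only [map_cons, prod_cons, sum_cons, Real.exp_add]
    set P := (m.map (1 + ·)).prod
    set T := (m.map (‖·‖)).sum
    have hP : ‖P - 1‖ ≤ Real.exp T - 1 := by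
      calc ‖P - 1‖ = ‖(P - 1 - m.sum) + m.sum‖ := by rw [sub_add_cancel]
        _ ≤ ‖P - 1 - m.sum‖ + ‖m.sum‖ := norm_add_le _ _
        _ ≤ (Real.exp T - 1 - T) + T := add_le_add ih (norm_multiset_sum_le m)
        _ = Real.exp T - 1 := by ring
    calc ‖(1 + x) * P - 1 - (x + m.sum)‖ = ‖(P - 1 - m.sum) + x * (P - 1)‖ := by ring_nf
      _ ≤ (Real.exp T - 1 - T) + ‖x‖ * (Real.exp T - 1) :=
        norm_add_le_of_le ih
          ((norm_mul_le _ _).trans (mul_le_mul_of_nonneg_left hP (norm_nonneg x)))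
      _ ≤ Real.exp ‖x‖ * Real.exp T - 1 - (‖x‖ + T) := by
        nlinarith [Real.add_one_le_exp ‖x‖, Real.exp_pos T]

end Multiset

section EulerFactor

variable {R : Type*}

def eulerFactor [CommRing R] (η : ℕ) (c z : R) : R :=
  (1 - z) ^ η * (1 - c * z) ^ η * (1 + η * (1 + c) * z)

open Multiset in
theorem eulerFactor_eq_prod [CommRing R] (η : ℕ) (c z : R) :
    eulerFactor η c z =
      ((replicate η (-z) + replicate η (-(c * z)) + {η * (1 + c) * z}).map (1 + ·)).prod := by
  simp [eulerFactor, sub_eq_add_neg]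

open Multiset in
theorem norm_eulerFactor_sub_one_le [NormedCommRing R] [NormOneClass R] (η : ℕ) {c z : R}
    (hc : ‖c‖ ≤ 1) (hz : 4 * η * ‖z‖ ≤ 1) : ‖eulerFactor η c z - 1‖ ≤ (4 * η * ‖z‖) ^ 2 := by
  set m := replicate η (-z) + replicate η (-(c * z)) + {η * (1 + c) * z}
  have hsum : m.sum = 0 := by simp [m, sum_replicate]; ring
  set T := (m.map (‖·‖)).sum
  have hT0 : 0 ≤ T := sum_nonneg fun _ hx => by
    obtain ⟨y, -, rfl⟩ := mem_map.1 hx; exact norm_nonneg y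
  have hT : T ≤ 4 * η * ‖z‖ := by
    have hη : ‖(η : R) * (1 + c)‖ ≤ η * 2 := by
      refine (norm_mul_le _ _).trans (mul_le_mul ?_ ?_ (norm_nonneg _) (Nat.cast_nonneg _))
      · simpa using Nat.norm_cast_le (α := R) η
      · exact (norm_add_le _ _).trans (by rw [norm_one]; linarith)
    have hcz : ‖c * z‖ ≤ ‖z‖ := (norm_mul_le _ _).trans (by nlinarith [norm_nonneg z])
    simp only [T, m, map_add, map_replicate, sum_add, sum_replicate, map_singleton,
      sum_singleton, nsmul_eq_mul, norm_neg]
    nlinarith [norm_mul_le ((η : R) * (1 + c)) z, norm_nonneg z, norm_nonneg (c * z),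
      (Nat.cast_nonneg η : (0 : ℝ) ≤ η)]
  calc ‖eulerFactor η c z - 1‖ = ‖(m.map (1 + ·)).prod - 1 - m.sum‖ := by
        rw [hsum, sub_zero, eulerFactor_eq_prod]
    _ ≤ Real.exp T - 1 - T := norm_prod_map_one_add_sub_one_sub_sum_le m
    _ ≤ T ^ 2 :=
      le_of_abs_le (Real.abs_exp_sub_one_sub_id_le (by rw [abs_of_nonneg hT0]; linarith))
    _ ≤ (4 * η * ‖z‖) ^ 2 := by gcongr

end EulerFactor

theorem Real.tprod_pos_of_summable_sub_one {ι : Type*} {f : ι → ℝ} (hpos : ∀ i, 0 < f i)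
    (hf : Summable fun i => f i - 1) : 0 < ∏' i, f i := by
  have hlog : Summable fun i => Real.log (f i) := by
    simpa using Real.summable_log_one_add_of_summable hf
  rw [← Real.rexp_tsum_eq_tprod hpos hlog]
  exact Real.exp_pos _

theorem Nat.Primes.tendsto_coe_cofinite_atTop :
    Tendsto (fun p : Nat.Primes => (p : ℕ)) cofinite atTop :=
  Nat.cofinite_eq_atTop ▸ Nat.Primes.coe_nat_injective.tendsto_cofinite

noncomputable def localFactor (η N : ℕ) (χ : ℕ → ℝ) (s : ℂ) (p : ℕ) : ℂ :=
  if p ∣ N then ((1 - (p : ℂ) ^ (-s)) * (1 - (χ p : ℂ) * (p : ℂ) ^ (-s))) ^ η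
  else eulerFactor η (χ p : ℂ) ((p : ℂ) ^ (-s))

section LocalFactor

variable {η N : ℕ} {χ : ℕ → ℝ} {s : ℂ}

theorem summable_norm_localFactor_sub_one (hN : 0 < N) (hχ : ∀ n, |χ n| ≤ 1)
    (hs : 1 / 2 < s.re) : Summable fun p : Nat.Primes => ‖localFactor η N χ s p - 1‖ := by
  have hsmall : ∀ᶠ p : Nat.Primes in cofinite, 4 * η * (p : ℝ) ^ (-s.re) ≤ 1 := by
    have : Tendsto (fun p : Nat.Primes => 4 * η * (p : ℝ) ^ (-s.re)) cofinite (𝓝 0) := by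
      simpa using ((tendsto_rpow_neg_atTop (by linarith)).comp
        (tendsto_natCast_atTop_atTop.comp Nat.Primes.tendsto_coe_cofinite_atTop)).const_mul
          (4 * η : ℝ)
    exact this.eventually (eventually_le_nhds one_pos)
  have hndvd : ∀ᶠ p : Nat.Primes in cofinite, ¬ (p : ℕ) ∣ N :=
    (Nat.Primes.tendsto_coe_cofinite_atTop.eventually_gt_atTop N).mono
      fun p hp hdvd => (Nat.le_of_dvd hN hdvd).not_gt hp
  refine Summable.of_norm_bounded_eventually
    ((Nat.Primes.summable_rpow.mpr (by linarith : -(2 * s.re) < -1)).mul_left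
      ((4 * η : ℝ) ^ 2)) ?_
  filter_upwards [hsmall, hndvd] with p hp hpN
  have hz : ‖((p : ℕ) : ℂ) ^ (-s)‖ = (p : ℝ) ^ (-s.re) := by
    rw [Complex.norm_natCast_cpow_of_pos p.prop.pos, Complex.neg_re]
  rw [norm_norm, localFactor, if_neg hpN]
  calc ‖eulerFactor η (χ p : ℂ) ((p : ℂ) ^ (-s)) - 1‖
      ≤ (4 * η * ‖((p : ℕ) : ℂ) ^ (-s)‖) ^ 2 :=
        norm_eulerFactor_sub_one_le η (by simpa using hχ p) (hz ▸ hp)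
    _ = (4 * η) ^ 2 * (p : ℝ) ^ (-(2 * s.re)) := by
        rw [hz, mul_pow, ← Real.rpow_mul_natCast (Nat.cast_nonneg _)]
        ring_nf

theorem multipliable_localFactor (hN : 0 < N) (hχ : ∀ n, |χ n| ≤ 1) (hs : 1 / 2 < s.re) :
    Multipliable fun p : Nat.Primes => localFactor η N χ s p := by
  simpa using multipliable_one_add_of_summable (summable_norm_localFactor_sub_one hN hχ hs)

end LocalFactor

noncomputable def localFactorAtOne (η N : ℕ) (χ : ℕ → ℝ) (p : ℕ) : ℝ :=
  if p ∣ N then ((1 - 1 / (p : ℝ)) * (1 - χ p / p)) ^ η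
  else (1 - 1 / (p : ℝ)) ^ η * (1 - χ p / p) ^ η * (1 + η * (1 + χ p) / p)

section LocalFactorAtOne

variable {η N : ℕ} {χ : ℕ → ℝ} {p : ℕ}

theorem ofReal_localFactorAtOne : (localFactorAtOne η N χ p : ℂ) = localFactor η N χ 1 p := by
  rw [localFactorAtOne, localFactor, Complex.cpow_neg_one]
  split_ifs <;> push_cast [eulerFactor] <;> ring

theorem localFactorAtOne_pos (hp : 2 ≤ p) (hχ : |χ p| ≤ 1) : 0 < localFactorAtOne η N χ p := by
  have hp' : (2 : ℝ) ≤ p := by exact_mod_cast hp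
  obtain ⟨hχl, hχu⟩ := abs_le.mp hχ
  have h1 : 0 < 1 - 1 / (p : ℝ) := by rw [sub_pos, div_lt_one (by positivity)]; linarith
  have h2 : 0 < 1 - χ p / p := by rw [sub_pos, div_lt_one (by positivity)]; linarith
  have h3 : 0 < 1 + η * (1 + χ p) / p := by
    have : 0 ≤ (η : ℝ) * (1 + χ p) / p := by
      apply div_nonneg (mul_nonneg (Nat.cast_nonneg _) (by linarith)) (by positivity)
    linarith
  unfold localFactorAtOne
  split_ifs <;> positivity

end LocalFactorAtOne

theorem euler_factor_product_converges_and_positive_general (η N : ℕ) (hN : 1 ≤ N)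
    (χ : ℕ → ℝ) (hχval : ∀ n : ℕ, χ n ∈ ({-1, 0, 1} : Set ℝ)) :
    (∀ s : ℂ, 1 / 2 < s.re →
      Multipliable (fun p : Nat.Primes =>
        if (p : ℕ) ∣ N then
          ((1 - ((p : ℕ) : ℂ) ^ (-s)) * (1 - (χ (p : ℕ) : ℂ) * ((p : ℕ) : ℂ) ^ (-s))) ^ η
        else
          (1 - ((p : ℕ) : ℂ) ^ (-s)) ^ η * (1 - (χ (p : ℕ) : ℂ) * ((p : ℕ) : ℂ) ^ (-s)) ^ η *
            (1 + (η : ℂ) * (1 + (χ (p : ℕ) : ℂ)) * ((p : ℕ) : ℂ) ^ (-s)))) ∧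
    0 < ∏' p : Nat.Primes,
        (if (p : ℕ) ∣ N then
          ((1 - 1 / ((p : ℕ) : ℝ)) * (1 - χ (p : ℕ) / ((p : ℕ) : ℝ))) ^ η
        else
          (1 - 1 / ((p : ℕ) : ℝ)) ^ η * (1 - χ (p : ℕ) / ((p : ℕ) : ℝ)) ^ η *
            (1 + (η : ℝ) * (1 + χ (p : ℕ)) / ((p : ℕ) : ℝ))) := by
  have hχ : ∀ n, |χ n| ≤ 1 := fun n => by
    obtain h | h | h : χ n = -1 ∨ χ n = 0 ∨ χ n = 1 := hχval n <;> simp [h]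
  refine ⟨fun s hs => multipliable_localFactor hN hχ hs, ?_⟩
  refine Real.tprod_pos_of_summable_sub_one (f := fun p : Nat.Primes => localFactorAtOne η N χ p)
    (fun p => localFactorAtOne_pos p.prop.two_le (hχ p)) (Summable.of_norm ?_)
  refine (summable_norm_localFactor_sub_one (η := η) (s := 1) hN hχ (by norm_num)).congr
    fun p => ?_
  rw [← ofReal_localFactorAtOne, ← Complex.ofReal_one, ← Complex.ofReal_sub, Complex.norm_real]

theorem euler_factor_product_converges_and_positive (η N : ℕ) (hη : 1 ≤ η) (hN : 1 ≤ N)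
    (χ : ℕ → ℝ) (hχ1 : χ 1 = 1) (hχmul : ∀ m n : ℕ, χ (m * n) = χ m * χ n)
    (hχval : ∀ n : ℕ, χ n ∈ ({-1, 0, 1} : Set ℝ)) :
    (∀ s : ℂ, 1 / 2 < s.re →
      Multipliable (fun p : Nat.Primes =>
        if (p : ℕ) ∣ N then
          ((1 - ((p : ℕ) : ℂ) ^ (-s)) * (1 - (χ (p : ℕ) : ℂ) * ((p : ℕ) : ℂ) ^ (-s))) ^ η
        else
          (1 - ((p : ℕ) : ℂ) ^ (-s)) ^ η * (1 - (χ (p : ℕ) : ℂ) * ((p : ℕ) : ℂ) ^ (-s)) ^ η *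
            (1 + (η : ℂ) * (1 + (χ (p : ℕ) : ℂ)) * ((p : ℕ) : ℂ) ^ (-s)))) ∧
    0 < ∏' p : Nat.Primes,
        (if (p : ℕ) ∣ N then
          ((1 - 1 / ((p : ℕ) : ℝ)) * (1 - χ (p : ℕ) / ((p : ℕ) : ℝ))) ^ η
        else
          (1 - 1 / ((p : ℕ) : ℝ)) ^ η * (1 - χ (p : ℕ) / ((p : ℕ) : ℝ)) ^ η *
            (1 + (η : ℝ) * (1 + χ (p : ℕ)) / ((p : ℕ) : ℝ))) :=
  euler_factor_product_converges_and_positive_general η N hN χ hχval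
end
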